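/- (Approximation Lemma III.) Assume k̄ satisfies assumptions (iii)–(vi), and let I_0 : ℝ^𝒴_+ → [0,∞) be continuous. Given a smooth bounded pair (c,w) ∈ C^∞_b((0,T); ℝ^𝒴_+ × ℝ^ℛ_+) with ẇ ≥ 0, ċ = Γẇ, J(c,w) < ∞, and with inf over t ∈ (0,T) and r ∈ ℛ of k̄^r(c(t)) strictly positive, there exists a family (c_δ,w_δ)_{δ∈(0,1)} ⊂ C^∞_b((0,T); ℝ^𝒴_+ × ℝ^ℛ_+) with ċ_δ = Γẇ_δ such that as δ → 0: (i) c_δ(0) → c(0) and (c_δ,w_δ) → (c,w) in the hybrid sense; (ii) I_0(c_δ(0)) + J(c_δ,w_δ) → I_0(c(0)) + J(c,w); (iii) for each δ > 0, inf over t ∈ (0,T) and r ∈ ℛ of k̄^r(c_δ(t)) is strictly positive; (iv) for each δ > 0, inf over t ∈ (0,T) and r ∈ ℛ of ẇ^r_δ(t) is strictly positive; and (v) the componentwise function ζ_δ(t) := log(ẇ_δ(t)/k̄(c_δ(t))) belongs to C^1_b((0,T); ℝ^ℛ). -/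

import Mathlib

open MeasureTheory Real Set Filter Topology

/-- The Boltzmann entropy function `s(j|k)`, valued in `[0,∞]`. -/
noncomputable def bes (j k : ℝ) : ENNReal :=
  if j = 0 then ENNReal.ofReal k
  else if k = 0 then ⊤
  else ENNReal.ofReal (j * Real.log (j / k) - j + k)

/-- The nonnegative cone `ℝ^𝒴₊`. -/
def nonnegCone (𝒴 : Type*) : Set (𝒴 → ℝ) := {c | ∀ y, 0 ≤ c y}

/-- The stoichiometric simplex `S(c)`. -/
def stoichSimplex {𝒴 ℛ : Type*} [Fintype ℛ] (γ : ℛ → 𝒴 → ℝ) (c : 𝒴 → ℝ) :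
    Set (𝒴 → ℝ) :=
  {c' | (∃ w : ℛ → ℝ, (∀ r, 0 ≤ w r) ∧ c' = fun y => c y + ∑ r, w r * γ r y)
        ∧ ∀ y, 0 ≤ c' y}

/-- The fattened stoichiometric simplex `S_ε(c)`. -/
def stoichSimplexEps {𝒴 ℛ : Type*} [Fintype 𝒴] [Fintype ℛ]
    (γ : ℛ → 𝒴 → ℝ) (c : 𝒴 → ℝ) (ε : ℝ) : Set (𝒴 → ℝ) :=
  {c' | ∃ c₁ : 𝒴 → ℝ, ‖c₁ - c‖ ≤ ε ∧ c' ∈ stoichSimplex γ c₁}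

lemma besEq {j k : ℝ} (hj : 0 ≤ j) (hk : 0 < k) :
    bes j k = ENNReal.ofReal (j * Real.log j - j * Real.log k - j + k) := by
  rcases hj.eq_or_lt with h | h
  · subst h; simp [bes]
  · rw [bes, if_neg h.ne', if_neg hk.ne', Real.log_div h.ne' hk.ne']
    congr 1; ring

lemma besB_tendsto {ι : Type*} {l : Filter ι} {j k : ι → ℝ} {J K : ℝ}
    (hj : Tendsto j l (𝓝 J)) (hk : Tendsto k l (𝓝 K)) (hK : 0 < K) :
    Tendsto (fun i => j i * Real.log (j i) - j i * Real.log (k i) - j i + k i) l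
      (𝓝 (J * Real.log J - J * Real.log K - J + K)) := by
  have h1 : Tendsto (fun i => j i * Real.log (j i)) l (𝓝 (J * Real.log J)) :=
    (Real.continuous_mul_log.tendsto J).comp hj
  have h2 : Tendsto (fun i => Real.log (k i)) l (𝓝 (Real.log K)) :=
    ((Real.continuousAt_log hK.ne').tendsto).comp hk
  exact (((h1.sub (hj.mul h2)).sub hj).add hk)

set_option maxHeartbeats 1000000 in
/-- Approximation Lemma III: under assumptions (iii)–(vi) on `k̄` and for
continuous `I₀ : ℝ^𝒴₊ → [0,∞)`, every smooth bounded pair `(c,w)` with `ẇ ≥ 0`,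
`ċ = Γẇ`, `J(c,w) < ∞` and rates `k̄^r(c(t))` uniformly bounded away from `0`, can be
approximated by a family `(c_δ,w_δ)` of smooth bounded pairs with `ċ_δ = Γẇ_δ` such
that (i) `c_δ(0) → c(0)` and `(c_δ,w_δ) → (c,w)` in the hybrid sense,
(ii) `I₀(c_δ(0)) + J(c_δ,w_δ) → I₀(c(0)) + J(c,w)`, (iii) the rates `k̄^r(c_δ(t))`
are bounded away from `0`, (iv) the fluxes `ẇ_δ^r(t)` are bounded away from `0`,
and (v) `ζ_δ := log(ẇ_δ / k̄(c_δ)) ∈ C¹_b((0,T); ℝ^ℛ)`. -/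
theorem stmt11
    {𝒴 ℛ : Type*} [Fintype 𝒴] [Fintype ℛ]
    (T : ℝ) (hT : 0 < T)
    (γ : ℛ → 𝒴 → ℝ)
    (kbar : (𝒴 → ℝ) → ℛ → ℝ)
    (hk_nonneg : ∀ c ∈ nonnegCone 𝒴, ∀ r, 0 ≤ kbar c r)
    -- (iii) C¹ regularity on the nonnegative cone
    (hk_C1 : ContDiffOn ℝ 1 kbar (nonnegCone 𝒴))
    -- (iv) boundedness of `k̄` and its derivative on fattened stoichiometric simplices
    (hk_bdd : ∀ c ∈ nonnegCone 𝒴, ∀ ε > 0, ∃ M : ℝ,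
      ∀ c' ∈ stoichSimplexEps γ c ε,
        ‖kbar c'‖ ≤ M ∧ ‖fderivWithin ℝ kbar (nonnegCone 𝒴) c'‖ ≤ M)
    -- (v) monotonicity
    (hk_mono : ∀ c chat : 𝒴 → ℝ, (∀ y, 0 ≤ c y) → (∀ y, c y ≤ chat y) →
      ∀ r, kbar c r ≤ kbar chat r)
    -- (vi) superhomogeneity
    (ψ : ℝ → ℝ) (hψ_mono : StrictMonoOn ψ (Set.Icc 0 1))
    (hψ_bij : Set.BijOn ψ (Set.Icc 0 1) (Set.Icc 0 1))
    (hk_shom : ∀ c ∈ nonnegCone 𝒴, ∀ δ ∈ Set.Icc (0:ℝ) 1, ∀ r,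
      ψ δ * kbar c r ≤ kbar (fun y => δ * c y) r)
    -- continuous nonnegative initial rate functional
    (I0 : (𝒴 → ℝ) → ℝ)
    (hI0_cont : ContinuousOn I0 (nonnegCone 𝒴))
    (hI0_nonneg : ∀ c ∈ nonnegCone 𝒴, 0 ≤ I0 c)
    -- the given smooth bounded pair
    (c : ℝ → 𝒴 → ℝ) (w : ℝ → ℛ → ℝ) (dc : ℝ → 𝒴 → ℝ) (dw : ℝ → ℛ → ℝ)
    (hc_cont : ContinuousOn c (Set.Icc 0 T)) (hw_cont : ContinuousOn w (Set.Icc 0 T))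
    (hc_smooth : ContDiffOn ℝ (⊤ : ℕ∞) c (Set.Ioo 0 T))
    (hw_smooth : ContDiffOn ℝ (⊤ : ℕ∞) w (Set.Ioo 0 T))
    (hderiv : ∀ t ∈ Set.Ioo (0:ℝ) T, HasDerivAt c (dc t) t ∧ HasDerivAt w (dw t) t)
    (hbdd : ∃ M : ℝ, ∀ t ∈ Set.Ioo (0:ℝ) T, ‖c t‖ + ‖w t‖ + ‖dc t‖ + ‖dw t‖ ≤ M)
    (hc_AC : ∀ t ∈ Set.Icc (0:ℝ) T, c t = c 0 + ∫ s in (0:ℝ)..t, dc s)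
    (hw_AC : ∀ t ∈ Set.Icc (0:ℝ) T, w t = w 0 + ∫ s in (0:ℝ)..t, dw s)
    (hpos : ∀ t ∈ Set.Icc (0:ℝ) T, (∀ y, 0 ≤ c t y) ∧ (∀ r, 0 ≤ w t r))
    (hconteq : ∀ t ∈ Set.Ioo (0:ℝ) T,
      (∀ r, 0 ≤ dw t r) ∧ dc t = fun y => ∑ r, dw t r * γ r y)
    (hJ : (∫⁻ t in Set.Ioo (0:ℝ) T, ∑ r, bes (dw t r) (kbar (c t) r)) < ⊤)
    (hklow : ∃ κ > (0:ℝ), ∀ t ∈ Set.Ioo (0:ℝ) T, ∀ r, κ ≤ kbar (c t) r) :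
    ∃ (cd : ℝ → ℝ → 𝒴 → ℝ) (wd : ℝ → ℝ → ℛ → ℝ)
      (dcd : ℝ → ℝ → 𝒴 → ℝ) (dwd : ℝ → ℝ → ℛ → ℝ),
      (∀ δ ∈ Set.Ioo (0:ℝ) 1,
        -- each member of the family is a smooth, bounded, admissible pair
        ContinuousOn (cd δ) (Set.Icc 0 T) ∧ ContinuousOn (wd δ) (Set.Icc 0 T)
        ∧ ContDiffOn ℝ (⊤ : ℕ∞) (cd δ) (Set.Ioo 0 T) ∧ ContDiffOn ℝ (⊤ : ℕ∞) (wd δ) (Set.Ioo 0 T)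
        ∧ (∀ t ∈ Set.Ioo (0:ℝ) T,
            HasDerivAt (cd δ) (dcd δ t) t ∧ HasDerivAt (wd δ) (dwd δ t) t)
        ∧ (∃ M : ℝ, ∀ t ∈ Set.Ioo (0:ℝ) T,
            ‖cd δ t‖ + ‖wd δ t‖ + ‖dcd δ t‖ + ‖dwd δ t‖ ≤ M)
        ∧ (∀ t ∈ Set.Icc (0:ℝ) T, cd δ t = cd δ 0 + ∫ s in (0:ℝ)..t, dcd δ s)
        ∧ (∀ t ∈ Set.Icc (0:ℝ) T, wd δ t = wd δ 0 + ∫ s in (0:ℝ)..t, dwd δ s)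
        ∧ (∀ t ∈ Set.Icc (0:ℝ) T, (∀ y, 0 ≤ cd δ t y) ∧ (∀ r, 0 ≤ wd δ t r))
        ∧ (∀ t ∈ Set.Ioo (0:ℝ) T, dcd δ t = fun y => ∑ r, dwd δ t r * γ r y)
        -- (iii) rates bounded away from zero
        ∧ (∃ κ > (0:ℝ), ∀ t ∈ Set.Ioo (0:ℝ) T, ∀ r, κ ≤ kbar (cd δ t) r)
        -- (iv) fluxes bounded away from zero
        ∧ (∃ κ > (0:ℝ), ∀ t ∈ Set.Ioo (0:ℝ) T, ∀ r, κ ≤ dwd δ t r)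
        -- (v) ζ_δ = log(ẇ_δ / k̄(c_δ)) is C¹ and bounded with bounded derivative
        ∧ ContDiffOn ℝ 1
            (fun t => fun r => Real.log (dwd δ t r / kbar (cd δ t) r)) (Set.Ioo 0 T)
        ∧ (∃ M : ℝ, ∀ t ∈ Set.Ioo (0:ℝ) T,
            ‖(fun r => Real.log (dwd δ t r / kbar (cd δ t) r))‖
              + ‖deriv (fun t => fun r => Real.log (dwd δ t r / kbar (cd δ t) r)) t‖
              ≤ M))
      -- (i) convergence of initial values and hybrid convergence
      ∧ Tendsto (fun δ => cd δ 0) (𝓝[>] (0:ℝ)) (𝓝 (c 0))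
      ∧ Tendsto (fun δ => ∫ t in Set.Ioo (0:ℝ) T, (‖cd δ t - c t‖ + ‖wd δ t - w t‖))
          (𝓝[>] (0:ℝ)) (𝓝 0)
      ∧ (∀ φ : ℝ → ℛ → ℝ, Continuous φ → HasCompactSupport φ →
          tsupport φ ⊆ Set.Ioo 0 T →
          Tendsto (fun δ => ∫ t in Set.Ioo (0:ℝ) T, ∑ r, φ t r * dwd δ t r)
            (𝓝[>] (0:ℝ)) (𝓝 (∫ t in Set.Ioo (0:ℝ) T, ∑ r, φ t r * dw t r)))
      ∧ (∀ ξ : ℝ → 𝒴 → ℝ, Continuous ξ → HasCompactSupport ξ →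
          tsupport ξ ⊆ Set.Ioo 0 T →
          Tendsto (fun δ => ∫ t in Set.Ioo (0:ℝ) T, ∑ y, ξ t y * dcd δ t y)
            (𝓝[>] (0:ℝ)) (𝓝 (∫ t in Set.Ioo (0:ℝ) T, ∑ y, ξ t y * dc t y)))
      -- (ii) convergence of the rate functionals
      ∧ Tendsto
          (fun δ => ENNReal.ofReal (I0 (cd δ 0))
            + ∫⁻ t in Set.Ioo (0:ℝ) T, ∑ r, bes (dwd δ t r) (kbar (cd δ t) r))
          (𝓝[>] (0:ℝ))
          (𝓝 (ENNReal.ofReal (I0 (c 0))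
            + ∫⁻ t in Set.Ioo (0:ℝ) T, ∑ r, bes (dw t r) (kbar (c t) r))) := by
  classical
  obtain ⟨κ, hκpos, hκ⟩ := hklow
  obtain ⟨M, hM⟩ := hbdd
  have hdc_eq : ∀ t ∈ Set.Ioo (0:ℝ) T, dc t = deriv c t :=
    fun t ht => ((hderiv t ht).1.deriv).symm
  have hdw_eq : ∀ t ∈ Set.Ioo (0:ℝ) T, dw t = deriv w t :=
    fun t ht => ((hderiv t ht).2.deriv).symm
  have hdw_smooth : ContDiffOn ℝ (⊤ : ℕ∞) dw (Set.Ioo 0 T) :=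
    (hw_smooth.deriv_of_isOpen isOpen_Ioo (by simp)).congr hdw_eq
  have hdc_cont : ContinuousOn dc (Set.Ioo 0 T) :=
    (hc_smooth.continuousOn_deriv_of_isOpen isOpen_Ioo (by simp)).congr hdc_eq
  have hdw_cont : ContinuousOn dw (Set.Ioo 0 T) := hdw_smooth.continuousOn
  -- the construction
  set aV : 𝒴 → ℝ := fun y => (T+1) * ∑ r, |γ r y| with haV
  set g1 : 𝒴 → ℝ := fun y => ∑ r, γ r y with hg1
  set lam : ℝ → ℝ := fun δ => 1 - δ/2 with hlam
  set ℓ : ℝ → ℝ → ℝ := fun δ t => δ*T/4 + lam δ * t with hℓ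
  set eps : ℝ → ℝ := fun δ => min (δ*T/8) 1 with heps
  set U : ℝ → Set ℝ := fun δ => Ioo (-(eps δ)) (T + eps δ) with hU
  set cd : ℝ → ℝ → 𝒴 → ℝ := fun δ t => fun y => c (ℓ δ t) y + δ * (aV y + t * g1 y) with hcd
  set wd : ℝ → ℝ → ℛ → ℝ := fun δ t => fun r => w (ℓ δ t) r + δ * t with hwd
  set dcd : ℝ → ℝ → 𝒴 → ℝ := fun δ t => fun y => lam δ * dc (ℓ δ t) y + δ * g1 y with hdcd
  set dwd : ℝ → ℝ → ℛ → ℝ := fun δ t => fun r => lam δ * dw (ℓ δ t) r + δ with hdwd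
  -- elementary facts
  have hlam_pos : ∀ δ ∈ Set.Ioo (0:ℝ) 1, 0 < lam δ ∧ lam δ ≤ 1 := by
    intro δ hδ
    constructor <;> simp only [hlam] <;> [linarith [hδ.2]; linarith [hδ.1]]
  have hepsf : ∀ δ ∈ Set.Ioo (0:ℝ) 1, 0 < eps δ ∧ eps δ ≤ δ*T/8 ∧ eps δ ≤ 1 := by
    intro δ hδ
    refine ⟨lt_min (by nlinarith [hδ.1, hT]) one_pos, min_le_left _ _, min_le_right _ _⟩
  have hUopen : ∀ δ, IsOpen (U δ) := fun δ => isOpen_Ioo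
  have hIccU : ∀ δ ∈ Set.Ioo (0:ℝ) 1, Set.Icc (0:ℝ) T ⊆ U δ := by
    intro δ hδ t ht
    obtain ⟨h1, h2, h3⟩ := hepsf δ hδ
    exact ⟨by linarith [ht.1], by linarith [ht.2]⟩
  have hIooU : ∀ δ ∈ Set.Ioo (0:ℝ) 1, Set.Ioo (0:ℝ) T ⊆ U δ := by
    intro δ hδ
    exact subset_trans Set.Ioo_subset_Icc_self (hIccU δ hδ)
  have hlmem : ∀ δ ∈ Set.Ioo (0:ℝ) 1, ∀ t ∈ U δ, ℓ δ t ∈ Set.Ioo (0:ℝ) T := by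
    intro δ hδ t ht
    obtain ⟨h1, h2, h3⟩ := hepsf δ hδ
    obtain ⟨hl1, hl2⟩ := hlam_pos δ hδ
    obtain ⟨ht1, ht2⟩ := ht
    have hδ1 := hδ.1; have hδ2 := hδ.2
    simp only [hℓ, hlam]
    constructor
    · nlinarith [mul_pos hl1 (sub_pos.mpr ht1), mul_le_one₀ hl2 h1.le h3]
    · nlinarith [mul_pos hl1 (sub_pos.mpr ht2)]
  have htB : ∀ δ ∈ Set.Ioo (0:ℝ) 1, ∀ t ∈ U δ, |t| ≤ T + 1 := by
    intro δ hδ t ht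
    obtain ⟨h1, h2, h3⟩ := hepsf δ hδ
    rw [abs_le]
    exact ⟨by linarith [ht.1], by linarith [ht.2]⟩
  -- nonnegativity of the shift
  have hagb : ∀ δ ∈ Set.Ioo (0:ℝ) 1, ∀ t ∈ U δ, ∀ y, 0 ≤ aV y + t * g1 y := by
    intro δ hδ t ht y
    have h1 : |g1 y| ≤ ∑ r, |γ r y| := Finset.abs_sum_le_sum_abs _ _
    have h2 : |t| ≤ T + 1 := htB δ hδ t ht
    have h3 : |t * g1 y| ≤ (T+1) * ∑ r, |γ r y| := by
      rw [abs_mul]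
      exact mul_le_mul h2 h1 (abs_nonneg _) (by linarith)
    have h4 := neg_abs_le (t * g1 y)
    simp only [haV]
    linarith
  have hcd_ge : ∀ δ ∈ Set.Ioo (0:ℝ) 1, ∀ t ∈ U δ, ∀ y, c (ℓ δ t) y ≤ cd δ t y := by
    intro δ hδ t ht y
    have := mul_nonneg hδ.1.le (hagb δ hδ t ht y)
    simp only [hcd]; linarith
  have hcd_cone : ∀ δ ∈ Set.Ioo (0:ℝ) 1, ∀ t ∈ U δ, cd δ t ∈ nonnegCone 𝒴 := by
    intro δ hδ t ht y
    exact le_trans ((hpos _ (Set.Ioo_subset_Icc_self (hlmem δ hδ t ht))).1 y) (hcd_ge δ hδ t ht y)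
  have hkcd : ∀ δ ∈ Set.Ioo (0:ℝ) 1, ∀ t ∈ U δ, ∀ r, κ ≤ kbar (cd δ t) r := by
    intro δ hδ t ht r
    refine le_trans (hκ _ (hlmem δ hδ t ht) r) ?_
    exact hk_mono _ _ (hpos _ (Set.Ioo_subset_Icc_self (hlmem δ hδ t ht))).1
      (hcd_ge δ hδ t ht) r
  have hdwd_pos : ∀ δ ∈ Set.Ioo (0:ℝ) 1, ∀ t ∈ U δ, ∀ r, δ ≤ dwd δ t r := by
    intro δ hδ t ht r
    have h1 := (hconteq _ (hlmem δ hδ t ht)).1 r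
    have := mul_nonneg (hlam_pos δ hδ).1.le h1
    simp only [hdwd]; linarith
  -- smoothness
  have hl_smooth : ∀ δ, ContDiff ℝ (⊤ : ℕ∞) (ℓ δ) := by
    intro δ; simp only [hℓ]; fun_prop
  have hlMapsTo : ∀ δ ∈ Set.Ioo (0:ℝ) 1, Set.MapsTo (ℓ δ) (U δ) (Set.Ioo 0 T) :=
    fun δ hδ t ht => hlmem δ hδ t ht
  have hcl_smooth : ∀ δ ∈ Set.Ioo (0:ℝ) 1, ContDiffOn ℝ (⊤ : ℕ∞) (fun t => c (ℓ δ t)) (U δ) :=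
    fun δ hδ => hc_smooth.comp ((hl_smooth δ).contDiffOn) (hlMapsTo δ hδ)
  have hcd_smoothU : ∀ δ ∈ Set.Ioo (0:ℝ) 1, ContDiffOn ℝ (⊤ : ℕ∞) (cd δ) (U δ) := by
    intro δ hδ
    rw [hcd]
    apply contDiffOn_pi.mpr
    intro y
    exact (contDiffOn_pi.mp (hcl_smooth δ hδ) y).add (by fun_prop)
  have hwd_smoothU : ∀ δ ∈ Set.Ioo (0:ℝ) 1, ContDiffOn ℝ (⊤ : ℕ∞) (wd δ) (U δ) := by
    intro δ hδ
    rw [hwd]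
    apply contDiffOn_pi.mpr
    intro r
    refine ContDiffOn.add ?_ (by fun_prop)
    exact contDiffOn_pi.mp (hw_smooth.comp ((hl_smooth δ).contDiffOn) (hlMapsTo δ hδ)) r
  have hdwd_smoothU : ∀ δ ∈ Set.Ioo (0:ℝ) 1, ContDiffOn ℝ (⊤ : ℕ∞) (dwd δ) (U δ) := by
    intro δ hδ
    rw [hdwd]
    apply contDiffOn_pi.mpr
    intro r
    refine ContDiffOn.add ?_ (by fun_prop)
    exact (contDiffOn_pi.mp (hdw_smooth.comp ((hl_smooth δ).contDiffOn) (hlMapsTo δ hδ)) r).const_smul (lam δ)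
  have hdcd_contU : ∀ δ ∈ Set.Ioo (0:ℝ) 1, ContinuousOn (dcd δ) (U δ) := by
    intro δ hδ
    rw [hdcd]
    apply continuousOn_pi.mpr
    intro y
    refine ContinuousOn.add (ContinuousOn.const_smul ?_ (lam δ)) continuousOn_const
    exact ((continuousOn_pi.mp (hdc_cont.comp ((hl_smooth δ).continuous.continuousOn) (hlMapsTo δ hδ))) y)
  -- derivatives
  have hlderiv : ∀ δ, ∀ t : ℝ, HasDerivAt (ℓ δ) (lam δ) t := by
    intro δ t
    simp only [hℓ]
    simpa using (((hasDerivAt_id t).const_mul (lam δ)).const_add (δ*T/4))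
  have hcd_deriv : ∀ δ ∈ Set.Ioo (0:ℝ) 1, ∀ t ∈ U δ, HasDerivAt (cd δ) (dcd δ t) t := by
    intro δ hδ t ht
    rw [hcd, hdcd]
    apply hasDerivAt_pi.mpr
    intro y
    have h1 : HasDerivAt (fun s => c s y) (dc (ℓ δ t) y) (ℓ δ t) :=
      (hasDerivAt_pi.mp (hderiv _ (hlmem δ hδ t ht)).1) y
    have h2 := h1.comp t (hlderiv δ t)
    have h3 : HasDerivAt (fun s : ℝ => δ * (aV y + s * g1 y)) (δ * g1 y) t := by
      simpa using ((((hasDerivAt_id t).mul_const (g1 y)).const_add (aV y)).const_mul δ)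
    have h4 := h2.add h3
    simp only [Function.comp_def, Pi.add_def] at h4 ⊢
    convert h4 using 1
    ring
  have hwd_deriv : ∀ δ ∈ Set.Ioo (0:ℝ) 1, ∀ t ∈ U δ, HasDerivAt (wd δ) (dwd δ t) t := by
    intro δ hδ t ht
    rw [hwd, hdwd]
    apply hasDerivAt_pi.mpr
    intro r
    have h1 : HasDerivAt (fun s => w s r) (dw (ℓ δ t) r) (ℓ δ t) :=
      (hasDerivAt_pi.mp (hderiv _ (hlmem δ hδ t ht)).2) r
    have h2 := h1.comp t (hlderiv δ t)
    have h3 : HasDerivAt (fun s : ℝ => δ * s) δ t := by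
      simpa using (hasDerivAt_id t).const_mul δ
    have h4 := h2.add h3
    simp only [Function.comp_def, Pi.add_def] at h4 ⊢
    convert h4 using 1
    ring
  -- uniform bounds
  obtain ⟨Mc, hMc⟩ := isCompact_Icc.exists_bound_of_continuousOn hc_cont
  obtain ⟨Mw, hMw⟩ := isCompact_Icc.exists_bound_of_continuousOn hw_cont
  have hMc0 : 0 ≤ Mc := le_trans (norm_nonneg _) (hMc 0 ⟨le_rfl, hT.le⟩)
  have hMw0 : 0 ≤ Mw := le_trans (norm_nonneg _) (hMw 0 ⟨le_rfl, hT.le⟩)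
  have hM0 : 0 ≤ M := by
    have := hM (T/2) ⟨by linarith, by linarith⟩
    have h1 := norm_nonneg (c (T/2)); have h2 := norm_nonneg (w (T/2))
    have h3 := norm_nonneg (dc (T/2)); have h4 := norm_nonneg (dw (T/2))
    linarith
  have hMdc : ∀ t ∈ Set.Ioo (0:ℝ) T, ‖dc t‖ ≤ M := by
    intro t ht
    have := hM t ht
    have h1 := norm_nonneg (c t); have h2 := norm_nonneg (w t)
    have h4 := norm_nonneg (dw t)
    linarith
  have hMdw : ∀ t ∈ Set.Ioo (0:ℝ) T, ‖dw t‖ ≤ M := by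
    intro t ht
    have := hM t ht
    have h1 := norm_nonneg (c t); have h2 := norm_nonneg (w t)
    have h3 := norm_nonneg (dc t)
    linarith
  set Ra : ℝ := ‖aV‖ + (T+1) * ‖g1‖ with hRa
  have hRa0 : 0 ≤ Ra := by
    have h1 := norm_nonneg aV; have h2 := norm_nonneg g1
    have : (0:ℝ) ≤ (T+1) * ‖g1‖ := by positivity
    simp only [hRa]; linarith
  have hshift_bd : ∀ δ ∈ Set.Ioo (0:ℝ) 1, ∀ t ∈ U δ, ∀ y, |δ * (aV y + t * g1 y)| ≤ Ra := by
    intro δ hδ t ht y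
    have h2 : |t| ≤ T + 1 := htB δ hδ t ht
    have h3 : |aV y| ≤ ‖aV‖ := by
      simpa [Real.norm_eq_abs] using norm_le_pi_norm aV y
    have h4 : |g1 y| ≤ ‖g1‖ := by
      simpa [Real.norm_eq_abs] using norm_le_pi_norm g1 y
    have h5 : |t * g1 y| ≤ (T+1) * ‖g1‖ := by
      rw [abs_mul]
      exact mul_le_mul h2 h4 (abs_nonneg _) (by linarith)
    calc |δ * (aV y + t * g1 y)| = |δ| * |aV y + t * g1 y| := abs_mul _ _
      _ ≤ 1 * |aV y + t * g1 y| := by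
          apply mul_le_mul_of_nonneg_right _ (abs_nonneg _)
          rw [abs_of_pos hδ.1]; exact hδ.2.le
      _ = |aV y + t * g1 y| := one_mul _
      _ ≤ |aV y| + |t * g1 y| := abs_add_le _ _
      _ ≤ Ra := by simp only [hRa]; linarith
  have hcd_bd : ∀ δ ∈ Set.Ioo (0:ℝ) 1, ∀ t ∈ Set.Icc (0:ℝ) T, ‖cd δ t‖ ≤ Mc + Ra := by
    intro δ hδ t ht
    rw [pi_norm_le_iff_of_nonneg (by linarith)]
    intro y
    have h1 : |c (ℓ δ t) y| ≤ Mc := le_trans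
      (by simpa [Real.norm_eq_abs] using norm_le_pi_norm (c (ℓ δ t)) y)
      (hMc _ (Set.Ioo_subset_Icc_self (hlmem δ hδ t (hIccU δ hδ ht))))
    have h2 := hshift_bd δ hδ t (hIccU δ hδ ht) y
    simp only [hcd, Real.norm_eq_abs]
    calc |c (ℓ δ t) y + δ * (aV y + t * g1 y)| ≤ _ + _ := abs_add_le _ _
      _ ≤ Mc + Ra := add_le_add h1 h2
  have hwd_bd : ∀ δ ∈ Set.Ioo (0:ℝ) 1, ∀ t ∈ Set.Icc (0:ℝ) T, ‖wd δ t‖ ≤ Mw + T := by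
    intro δ hδ t ht
    rw [pi_norm_le_iff_of_nonneg (by linarith [hT])]
    intro r
    have h1 : |w (ℓ δ t) r| ≤ Mw := le_trans
      (by simpa [Real.norm_eq_abs] using norm_le_pi_norm (w (ℓ δ t)) r)
      (hMw _ (Set.Ioo_subset_Icc_self (hlmem δ hδ t (hIccU δ hδ ht))))
    have h2 : |δ * t| ≤ T := by
      rw [abs_mul, abs_of_pos hδ.1, abs_of_nonneg ht.1]
      nlinarith [hδ.2, ht.2, ht.1]
    simp only [hwd, Real.norm_eq_abs]
    calc |w (ℓ δ t) r + δ * t| ≤ _ + _ := abs_add_le _ _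
      _ ≤ Mw + T := add_le_add h1 h2
  have hdwd_bd : ∀ δ ∈ Set.Ioo (0:ℝ) 1, ∀ t ∈ Set.Icc (0:ℝ) T, ‖dwd δ t‖ ≤ M + 1 := by
    intro δ hδ t ht
    rw [pi_norm_le_iff_of_nonneg (by linarith)]
    intro r
    have hmem := hlmem δ hδ t (hIccU δ hδ ht)
    have h1 : |dw (ℓ δ t) r| ≤ M := le_trans
      (by simpa [Real.norm_eq_abs] using norm_le_pi_norm (dw (ℓ δ t)) r)
      (hMdw _ hmem)
    simp only [hdwd, Real.norm_eq_abs]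
    have hl2 := (hlam_pos δ hδ).2
    have hl1 := (hlam_pos δ hδ).1
    calc |lam δ * dw (ℓ δ t) r + δ| ≤ |lam δ * dw (ℓ δ t) r| + |δ| := abs_add_le _ _
      _ = |lam δ| * |dw (ℓ δ t) r| + |δ| := by rw [abs_mul]
      _ ≤ 1 * M + 1 := by
          refine add_le_add (mul_le_mul (by rwa [abs_of_pos hl1]) h1 (abs_nonneg _) one_pos.le) ?_
          rw [abs_of_pos hδ.1]; exact hδ.2.le
      _ = M + 1 := by ring
  have hdcd_bd : ∀ δ ∈ Set.Ioo (0:ℝ) 1, ∀ t ∈ Set.Icc (0:ℝ) T, ‖dcd δ t‖ ≤ M + ‖g1‖ := by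
    intro δ hδ t ht
    rw [pi_norm_le_iff_of_nonneg (by positivity)]
    intro y
    have hmem := hlmem δ hδ t (hIccU δ hδ ht)
    have h1 : |dc (ℓ δ t) y| ≤ M := le_trans
      (by simpa [Real.norm_eq_abs] using norm_le_pi_norm (dc (ℓ δ t)) y)
      (hMdc _ hmem)
    have h4 : |g1 y| ≤ ‖g1‖ := by
      simpa [Real.norm_eq_abs] using norm_le_pi_norm g1 y
    simp only [hdcd, Real.norm_eq_abs]
    have hl1 := (hlam_pos δ hδ).1
    have hl2 := (hlam_pos δ hδ).2
    calc |lam δ * dc (ℓ δ t) y + δ * g1 y| ≤ |lam δ * dc (ℓ δ t) y| + |δ * g1 y| := abs_add_le _ _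
      _ = |lam δ| * |dc (ℓ δ t) y| + |δ| * |g1 y| := by rw [abs_mul, abs_mul]
      _ ≤ 1 * M + 1 * ‖g1‖ := by
          refine add_le_add (mul_le_mul (by rwa [abs_of_pos hl1]) h1 (abs_nonneg _) one_pos.le)
            (mul_le_mul (by rw [abs_of_pos hδ.1]; exact hδ.2.le) h4 (abs_nonneg _) one_pos.le)
      _ = M + ‖g1‖ := by ring
  -- the log-ratio is C^1 on U
  have hK_C1 : ∀ δ ∈ Set.Ioo (0:ℝ) 1, ContDiffOn ℝ 1 (fun t => kbar (cd δ t)) (U δ) :=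
    fun δ hδ => hk_C1.comp ((hcd_smoothU δ hδ).of_le (by simp)) (fun t ht => hcd_cone δ hδ t ht)
  have hζ_C1 : ∀ δ ∈ Set.Ioo (0:ℝ) 1,
      ContDiffOn ℝ 1 (fun t => fun r => Real.log (dwd δ t r / kbar (cd δ t) r)) (U δ) := by
    intro δ hδ
    apply contDiffOn_pi.mpr
    intro r
    have hnum : ContDiffOn ℝ 1 (fun t => dwd δ t r) (U δ) :=
      contDiffOn_pi.mp ((hdwd_smoothU δ hδ).of_le (by simp)) r
    have hden : ContDiffOn ℝ 1 (fun t => kbar (cd δ t) r) (U δ) :=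
      contDiffOn_pi.mp (hK_C1 δ hδ) r
    have hq := hnum.div hden (fun t ht => (lt_of_lt_of_le hκpos (hkcd δ hδ t ht r)).ne')
    intro t ht
    have hpos : (0:ℝ) < dwd δ t r / kbar (cd δ t) r :=
      div_pos (lt_of_lt_of_le hδ.1 (hdwd_pos δ hδ t ht r))
        (lt_of_lt_of_le hκpos (hkcd δ hδ t ht r))
    exact (Real.contDiffAt_log.mpr hpos.ne').comp_contDiffWithinAt t (hq t ht)
  -- fundamental theorem of calculus for the pair
  have hcd_FTC : ∀ δ ∈ Set.Ioo (0:ℝ) 1, ∀ t ∈ Set.Icc (0:ℝ) T,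
      cd δ t = cd δ 0 + ∫ s in (0:ℝ)..t, dcd δ s := by
    intro δ hδ t ht
    have hsub : Set.uIcc (0:ℝ) t ⊆ Set.Icc 0 T := by
      rw [Set.uIcc_of_le ht.1]
      exact Set.Icc_subset_Icc le_rfl ht.2
    have h1 := intervalIntegral.integral_eq_sub_of_hasDerivAt
      (f := cd δ) (f' := dcd δ)
      (fun s hs => hcd_deriv δ hδ s (hIccU δ hδ (hsub hs)))
      (((hdcd_contU δ hδ).mono (subset_trans hsub (hIccU δ hδ))).intervalIntegrable)
    rw [h1]
    abel
  have hwd_FTC : ∀ δ ∈ Set.Ioo (0:ℝ) 1, ∀ t ∈ Set.Icc (0:ℝ) T,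
      wd δ t = wd δ 0 + ∫ s in (0:ℝ)..t, dwd δ s := by
    intro δ hδ t ht
    have hsub : Set.uIcc (0:ℝ) t ⊆ Set.Icc 0 T := by
      rw [Set.uIcc_of_le ht.1]
      exact Set.Icc_subset_Icc le_rfl ht.2
    have h1 := intervalIntegral.integral_eq_sub_of_hasDerivAt
      (f := wd δ) (f' := dwd δ)
      (fun s hs => hwd_deriv δ hδ s (hIccU δ hδ (hsub hs)))
      ((((hdwd_smoothU δ hδ).continuousOn).mono (subset_trans hsub (hIccU δ hδ))).intervalIntegrable)
    rw [h1]
    abel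
  -- pointwise limits as δ → 0⁺
  have hev : ∀ᶠ δ in 𝓝[>] (0:ℝ), δ ∈ Set.Ioo (0:ℝ) 1 :=
    Ioo_mem_nhdsGT_of_mem ⟨le_rfl, one_pos⟩
  have hδ0 : Tendsto (fun δ : ℝ => δ) (𝓝[>] (0:ℝ)) (𝓝 0) :=
    tendsto_id.mono_left nhdsWithin_le_nhds
  have hlam_tend : Tendsto lam (𝓝[>] (0:ℝ)) (𝓝 1) := by
    have hc : Continuous lam := by simp only [hlam]; fun_prop
    have := (hc.tendsto' 0 1 (by simp [hlam])).mono_left (nhdsWithin_le_nhds (s := Set.Ioi 0))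
    exact this
  have hl_tend : ∀ t : ℝ, Tendsto (fun δ => ℓ δ t) (𝓝[>] (0:ℝ)) (𝓝 t) := by
    intro t
    have hc : Continuous (fun δ => ℓ δ t) := by simp only [hℓ, hlam]; fun_prop
    exact (hc.tendsto' 0 t (by simp [hℓ, hlam])).mono_left nhdsWithin_le_nhds
  have hc_at : ∀ t ∈ Set.Ioo (0:ℝ) T,
      Tendsto (fun δ => c (ℓ δ t)) (𝓝[>] (0:ℝ)) (𝓝 (c t)) := fun t ht =>
    ((hc_smooth.continuousOn.continuousAt (Ioo_mem_nhds ht.1 ht.2)).tendsto).comp (hl_tend t)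
  have hw_at : ∀ t ∈ Set.Ioo (0:ℝ) T,
      Tendsto (fun δ => w (ℓ δ t)) (𝓝[>] (0:ℝ)) (𝓝 (w t)) := fun t ht =>
    ((hw_smooth.continuousOn.continuousAt (Ioo_mem_nhds ht.1 ht.2)).tendsto).comp (hl_tend t)
  have hdc_at : ∀ t ∈ Set.Ioo (0:ℝ) T,
      Tendsto (fun δ => dc (ℓ δ t)) (𝓝[>] (0:ℝ)) (𝓝 (dc t)) := fun t ht =>
    ((hdc_cont.continuousAt (Ioo_mem_nhds ht.1 ht.2)).tendsto).comp (hl_tend t)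
  have hdw_at : ∀ t ∈ Set.Ioo (0:ℝ) T,
      Tendsto (fun δ => dw (ℓ δ t)) (𝓝[>] (0:ℝ)) (𝓝 (dw t)) := fun t ht =>
    ((hdw_cont.continuousAt (Ioo_mem_nhds ht.1 ht.2)).tendsto).comp (hl_tend t)
  have hcd_pt : ∀ t ∈ Set.Ioo (0:ℝ) T,
      Tendsto (fun δ => cd δ t) (𝓝[>] (0:ℝ)) (𝓝 (c t)) := by
    intro t ht
    apply tendsto_pi_nhds.mpr
    intro y
    have h1 := (((continuous_apply y).tendsto _).comp (hc_at t ht))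
    have h2 := hδ0.mul_const (aV y + t * g1 y)
    simp only [hcd]
    simpa using h1.add h2
  have hwd_pt : ∀ t ∈ Set.Ioo (0:ℝ) T,
      Tendsto (fun δ => wd δ t) (𝓝[>] (0:ℝ)) (𝓝 (w t)) := by
    intro t ht
    apply tendsto_pi_nhds.mpr
    intro r
    have h1 := (((continuous_apply r).tendsto _).comp (hw_at t ht))
    have h2 := hδ0.mul_const t
    simp only [hwd]
    simpa using h1.add h2
  have hdwd_pt : ∀ t ∈ Set.Ioo (0:ℝ) T, ∀ r,
      Tendsto (fun δ => dwd δ t r) (𝓝[>] (0:ℝ)) (𝓝 (dw t r)) := by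
    intro t ht r
    have h1 := hlam_tend.mul (((continuous_apply r).tendsto _).comp (hdw_at t ht))
    simp only [hdwd]
    simpa using h1.add hδ0
  have hdcd_pt : ∀ t ∈ Set.Ioo (0:ℝ) T, ∀ y,
      Tendsto (fun δ => dcd δ t y) (𝓝[>] (0:ℝ)) (𝓝 (dc t y)) := by
    intro t ht y
    have h1 := hlam_tend.mul (((continuous_apply y).tendsto _).comp (hdc_at t ht))
    have h2 := hδ0.mul_const (g1 y)
    simp only [hdcd]
    simpa using h1.add h2
  have hinit : Tendsto (fun δ => cd δ 0) (𝓝[>] (0:ℝ)) (𝓝 (c 0)) := by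
    apply tendsto_pi_nhds.mpr
    intro y
    have h0 : Tendsto (fun δ => ℓ δ 0) (𝓝[>] (0:ℝ)) (𝓝[Set.Icc 0 T] 0) := by
      rw [tendsto_nhdsWithin_iff]
      refine ⟨hl_tend 0, ?_⟩
      filter_upwards [hev] with δ hδ
      exact Set.Ioo_subset_Icc_self (hlmem δ hδ 0 (hIccU δ hδ ⟨le_rfl, hT.le⟩))
    have h1 : Tendsto (fun δ => c (ℓ δ 0)) (𝓝[>] (0:ℝ)) (𝓝 (c 0)) :=
      Filter.Tendsto.comp (hc_cont 0 ⟨le_rfl, hT.le⟩) h0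
    have h2 := hδ0.mul_const (aV y + 0 * g1 y)
    simp only [hcd]
    simpa using (((continuous_apply y).tendsto _).comp h1).add h2
  -- uniform upper bound for the rates along the approximating family
  have hConeClosed : IsClosed (nonnegCone 𝒴) := by
    have : nonnegCone 𝒴 = ⋂ y, {f : 𝒴 → ℝ | 0 ≤ f y} := by
      ext f; simp [nonnegCone, Set.mem_iInter]
    rw [this]
    exact isClosed_iInter fun y => isClosed_le continuous_const (continuous_apply y)
  obtain ⟨Mk, hMk⟩ : ∃ Mk : ℝ, ∀ δ ∈ Set.Ioo (0:ℝ) 1, ∀ t ∈ Set.Icc (0:ℝ) T, ∀ r,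
      kbar (cd δ t) r ≤ Mk := by
    set S := ((fun p : ℝ × (𝒴 → ℝ) => c p.1 + p.2) ''
      ((Set.Icc (0:ℝ) T) ×ˢ (Metric.closedBall 0 Ra))) ∩ nonnegCone 𝒴 with hS
    have hScomp : IsCompact S := by
      refine IsCompact.inter_right ?_ hConeClosed
      refine (isCompact_Icc.prod (isCompact_closedBall 0 Ra)).image_of_continuousOn ?_
      exact (hc_cont.comp continuous_fst.continuousOn (fun p hp => hp.1)).add
        continuous_snd.continuousOn
    obtain ⟨Mk, hMk⟩ := hScomp.exists_bound_of_continuousOn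
      (hk_C1.continuousOn.mono Set.inter_subset_right)
    refine ⟨Mk, fun δ hδ t ht r => ?_⟩
    have hmem : cd δ t ∈ S := by
      constructor
      · refine ⟨(ℓ δ t, fun y => δ * (aV y + t * g1 y)), ⟨?_, ?_⟩, ?_⟩
        · exact Set.Ioo_subset_Icc_self (hlmem δ hδ t (hIccU δ hδ ht))
        · rw [Metric.mem_closedBall, dist_zero_right]
          rw [pi_norm_le_iff_of_nonneg hRa0]
          intro y
          rw [Real.norm_eq_abs]
          exact hshift_bd δ hδ t (hIccU δ hδ ht) y
        · funext y; simp [hcd]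
      · exact hcd_cone δ hδ t (hIccU δ hδ ht)
    calc kbar (cd δ t) r ≤ |kbar (cd δ t) r| := le_abs_self _
      _ ≤ ‖kbar (cd δ t)‖ := by
          simpa [Real.norm_eq_abs] using norm_le_pi_norm (kbar (cd δ t)) r
      _ ≤ Mk := hMk _ hmem
  -- a uniform bound for the Boltzmann integrand
  obtain ⟨CB, hCB⟩ : ∃ CB : ℝ, ∀ j ∈ Set.Icc (0:ℝ) (M+1), ∀ k ∈ Set.Icc κ Mk,
      j * Real.log j - j * Real.log k - j + k ≤ CB := by
    have hBc : ContinuousOn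
        (fun p : ℝ × ℝ => p.1 * Real.log p.1 - p.1 * Real.log p.2 - p.1 + p.2)
        ((Set.Icc (0:ℝ) (M+1)) ×ˢ (Set.Icc κ Mk)) := by
      have hlogk : ContinuousOn (fun p : ℝ × ℝ => Real.log p.2)
          ((Set.Icc (0:ℝ) (M+1)) ×ˢ (Set.Icc κ Mk)) := by
        refine Real.continuousOn_log.comp continuous_snd.continuousOn ?_
        intro p hp
        exact (lt_of_lt_of_le hκpos hp.2.1).ne'
      exact (((Real.continuous_mul_log.comp continuous_fst).continuousOn.sub
        (continuous_fst.continuousOn.mul hlogk)).sub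
        continuous_fst.continuousOn).add continuous_snd.continuousOn
    obtain ⟨CB, hCB⟩ := (isCompact_Icc.prod isCompact_Icc).exists_bound_of_continuousOn hBc
    refine ⟨CB, fun j hj k hk => ?_⟩
    have := hCB (j, k) ⟨hj, hk⟩
    rw [Real.norm_eq_abs] at this
    exact le_trans (le_abs_self _) this
  -- continuity facts on `Ioo 0 T` for the family
  have hcdC : ∀ δ ∈ Set.Ioo (0:ℝ) 1, ContinuousOn (cd δ) (Set.Ioo 0 T) :=
    fun δ hδ => (hcd_smoothU δ hδ).continuousOn.mono (hIooU δ hδ)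
  have hwdC : ∀ δ ∈ Set.Ioo (0:ℝ) 1, ContinuousOn (wd δ) (Set.Ioo 0 T) :=
    fun δ hδ => (hwd_smoothU δ hδ).continuousOn.mono (hIooU δ hδ)
  have hdwdC : ∀ δ ∈ Set.Ioo (0:ℝ) 1, ContinuousOn (dwd δ) (Set.Ioo 0 T) :=
    fun δ hδ => (hdwd_smoothU δ hδ).continuousOn.mono (hIooU δ hδ)
  have hdcdC : ∀ δ ∈ Set.Ioo (0:ℝ) 1, ContinuousOn (dcd δ) (Set.Ioo 0 T) :=
    fun δ hδ => (hdcd_contU δ hδ).mono (hIooU δ hδ)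
  refine ⟨cd, wd, dcd, dwd, ?_, hinit, ?_, ?_, ?_, ?_⟩
  · -- per-δ properties
    intro δ hδ
    have hIoo := hIooU δ hδ
    have hIcc := hIccU δ hδ
    refine ⟨(hcd_smoothU δ hδ).continuousOn.mono hIcc,
      (hwd_smoothU δ hδ).continuousOn.mono hIcc,
      (hcd_smoothU δ hδ).mono hIoo, (hwd_smoothU δ hδ).mono hIoo,
      fun t ht => ⟨hcd_deriv δ hδ t (hIoo ht), hwd_deriv δ hδ t (hIoo ht)⟩,
      ⟨(Mc+Ra)+(Mw+T)+((M+‖g1‖)+(M+1)), fun t ht => ?_⟩,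
      hcd_FTC δ hδ, hwd_FTC δ hδ,
      fun t ht => ⟨fun y => hcd_cone δ hδ t (hIcc ht) y, fun r => ?_⟩,
      fun t ht => ?_,
      ⟨κ, hκpos, fun t ht r => hkcd δ hδ t (hIoo ht) r⟩,
      ⟨δ, hδ.1, fun t ht r => hdwd_pos δ hδ t (hIoo ht) r⟩,
      (hζ_C1 δ hδ).mono hIoo, ?_⟩
    · -- boundedness
      have h1 := hcd_bd δ hδ t (Set.Ioo_subset_Icc_self ht)
      have h2 := hwd_bd δ hδ t (Set.Ioo_subset_Icc_self ht)
      have h3 := hdcd_bd δ hδ t (Set.Ioo_subset_Icc_self ht)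
      have h4 := hdwd_bd δ hδ t (Set.Ioo_subset_Icc_self ht)
      linarith
    · -- nonnegativity of wd
      have h1 := (hpos _ (Set.Ioo_subset_Icc_self (hlmem δ hδ t (hIcc ht)))).2 r
      have h2 : 0 ≤ δ * t := mul_nonneg hδ.1.le ht.1
      simp only [hwd]
      linarith
    · -- continuity equation
      funext y
      have h := congrFun ((hconteq _ (hlmem δ hδ t (hIoo ht))).2) y
      simp only [hdcd, hdwd, hg1]
      rw [h, Finset.mul_sum, Finset.mul_sum]
      rw [← Finset.sum_add_distrib]
      refine Finset.sum_congr rfl fun r _ => by ring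
    · -- C¹-bound for ζ
      obtain ⟨C1, hC1⟩ := isCompact_Icc.exists_bound_of_continuousOn
        ((hζ_C1 δ hδ).continuousOn.mono hIcc)
      obtain ⟨C2, hC2⟩ := isCompact_Icc.exists_bound_of_continuousOn
        (((hζ_C1 δ hδ).continuousOn_deriv_of_isOpen (hUopen δ) le_rfl).mono hIcc)
      exact ⟨C1 + C2, fun t ht => add_le_add (hC1 t (Set.Ioo_subset_Icc_self ht))
        (hC2 t (Set.Ioo_subset_Icc_self ht))⟩
  · -- L¹ convergence
    have key := tendsto_integral_filter_of_dominated_convergence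
      (μ := volume.restrict (Set.Ioo (0:ℝ) T)) (l := 𝓝[>] (0:ℝ))
      (F := fun δ t => ‖cd δ t - c t‖ + ‖wd δ t - w t‖) (f := fun _ => (0:ℝ))
      (bound := fun _ => (Mc + Ra + Mc) + (Mw + T + Mw)) ?_ ?_ ?_ ?_
    · simpa using key
    · filter_upwards [hev] with δ hδ
      refine ContinuousOn.aestronglyMeasurable ?_ measurableSet_Ioo
      exact (((hcdC δ hδ).sub (hc_cont.mono Set.Ioo_subset_Icc_self)).norm).add
        (((hwdC δ hδ).sub (hw_cont.mono Set.Ioo_subset_Icc_self)).norm)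
    · filter_upwards [hev] with δ hδ
      rw [ae_restrict_iff' measurableSet_Ioo]
      refine ae_of_all _ fun t ht => ?_
      have h1 : ‖cd δ t - c t‖ ≤ Mc + Ra + Mc := by
        refine le_trans (norm_sub_le _ _) ?_
        have := hcd_bd δ hδ t (Set.Ioo_subset_Icc_self ht)
        have := hMc t (Set.Ioo_subset_Icc_self ht)
        linarith
      have h2 : ‖wd δ t - w t‖ ≤ Mw + T + Mw := by
        refine le_trans (norm_sub_le _ _) ?_
        have := hwd_bd δ hδ t (Set.Ioo_subset_Icc_self ht)
        have := hMw t (Set.Ioo_subset_Icc_self ht)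
        linarith
      have h3 : (0:ℝ) ≤ ‖cd δ t - c t‖ + ‖wd δ t - w t‖ :=
        add_nonneg (norm_nonneg _) (norm_nonneg _)
      rw [Real.norm_eq_abs, abs_of_nonneg h3]
      linarith
    · exact (integrableOn_const measure_Ioo_lt_top.ne)
    · rw [ae_restrict_iff' measurableSet_Ioo]
      refine ae_of_all _ fun t ht => ?_
      have h1 : Tendsto (fun δ => ‖cd δ t - c t‖) (𝓝[>] (0:ℝ)) (𝓝 0) := by
        have := ((hcd_pt t ht).sub (tendsto_const_nhds (x := c t))).norm
        simpa using this
      have h2 : Tendsto (fun δ => ‖wd δ t - w t‖) (𝓝[>] (0:ℝ)) (𝓝 0) := by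
        have := ((hwd_pt t ht).sub (tendsto_const_nhds (x := w t))).norm
        simpa using this
      simpa using h1.add h2
  · -- hybrid convergence: flux tests
    intro φ hφc hφsupp hφsub
    obtain ⟨Cφ, hCφ⟩ := hφsupp.exists_bound_of_continuous hφc
    have hCφ0 : 0 ≤ Cφ := le_trans (norm_nonneg _) (hCφ 0)
    refine tendsto_integral_filter_of_dominated_convergence
      (bound := fun _ => (Fintype.card ℛ : ℝ) * (Cφ * (M+1))) ?_ ?_ ?_ ?_
    · filter_upwards [hev] with δ hδ
      refine ContinuousOn.aestronglyMeasurable ?_ measurableSet_Ioo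
      refine continuousOn_finset_sum _ fun r _ => ?_
      exact ((continuous_apply r).comp hφc).continuousOn.mul
        (continuousOn_pi.mp (hdwdC δ hδ) r)
    · filter_upwards [hev] with δ hδ
      rw [ae_restrict_iff' measurableSet_Ioo]
      refine ae_of_all _ fun t ht => ?_
      rw [Real.norm_eq_abs]
      refine le_trans (Finset.abs_sum_le_sum_abs _ _) ?_
      have hb : ∀ r ∈ (Finset.univ : Finset ℛ), |φ t r * dwd δ t r| ≤ Cφ * (M+1) := by
        intro r _
        rw [abs_mul]
        refine mul_le_mul ?_ ?_ (abs_nonneg _) hCφ0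
        · exact le_trans (by simpa [Real.norm_eq_abs] using norm_le_pi_norm (φ t) r) (hCφ t)
        · refine le_trans ?_ (hdwd_bd δ hδ t (Set.Ioo_subset_Icc_self ht))
          simpa [Real.norm_eq_abs] using norm_le_pi_norm (dwd δ t) r
      refine le_trans (Finset.sum_le_card_nsmul _ _ _ hb) ?_
      simp [nsmul_eq_mul]
    · exact (integrableOn_const measure_Ioo_lt_top.ne)
    · rw [ae_restrict_iff' measurableSet_Ioo]
      refine ae_of_all _ fun t ht => ?_
      exact tendsto_finset_sum _ fun r _ => tendsto_const_nhds.mul (hdwd_pt t ht r)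
  · -- hybrid convergence: concentration tests
    intro ξ hξc hξsupp hξsub
    obtain ⟨Cξ, hCξ⟩ := hξsupp.exists_bound_of_continuous hξc
    have hCξ0 : 0 ≤ Cξ := le_trans (norm_nonneg _) (hCξ 0)
    refine tendsto_integral_filter_of_dominated_convergence
      (bound := fun _ => (Fintype.card 𝒴 : ℝ) * (Cξ * (M+‖g1‖))) ?_ ?_ ?_ ?_
    · filter_upwards [hev] with δ hδ
      refine ContinuousOn.aestronglyMeasurable ?_ measurableSet_Ioo
      refine continuousOn_finset_sum _ fun y _ => ?_
      exact ((continuous_apply y).comp hξc).continuousOn.mul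
        (continuousOn_pi.mp (hdcdC δ hδ) y)
    · filter_upwards [hev] with δ hδ
      rw [ae_restrict_iff' measurableSet_Ioo]
      refine ae_of_all _ fun t ht => ?_
      rw [Real.norm_eq_abs]
      refine le_trans (Finset.abs_sum_le_sum_abs _ _) ?_
      have hb : ∀ y ∈ (Finset.univ : Finset 𝒴), |ξ t y * dcd δ t y| ≤ Cξ * (M+‖g1‖) := by
        intro y _
        rw [abs_mul]
        refine mul_le_mul ?_ ?_ (abs_nonneg _) hCξ0
        · exact le_trans (by simpa [Real.norm_eq_abs] using norm_le_pi_norm (ξ t) y) (hCξ t)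
        · refine le_trans ?_ (hdcd_bd δ hδ t (Set.Ioo_subset_Icc_self ht))
          simpa [Real.norm_eq_abs] using norm_le_pi_norm (dcd δ t) y
      refine le_trans (Finset.sum_le_card_nsmul _ _ _ hb) ?_
      simp [nsmul_eq_mul]
    · exact (integrableOn_const measure_Ioo_lt_top.ne)
    · rw [ae_restrict_iff' measurableSet_Ioo]
      refine ae_of_all _ fun t ht => ?_
      exact tendsto_finset_sum _ fun y _ => tendsto_const_nhds.mul (hdcd_pt t ht y)
  · -- convergence of the rate functionals
    have hIpart : Tendsto (fun δ => ENNReal.ofReal (I0 (cd δ 0))) (𝓝[>] (0:ℝ))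
        (𝓝 (ENNReal.ofReal (I0 (c 0)))) := by
      have hmem0 : c 0 ∈ nonnegCone 𝒴 := fun y => (hpos 0 ⟨le_rfl, hT.le⟩).1 y
      have h2 : Tendsto (fun δ => cd δ 0) (𝓝[>] (0:ℝ)) (𝓝[nonnegCone 𝒴] (c 0)) := by
        rw [tendsto_nhdsWithin_iff]
        refine ⟨hinit, ?_⟩
        filter_upwards [hev] with δ hδ
        exact hcd_cone δ hδ 0 (hIccU δ hδ ⟨le_rfl, hT.le⟩)
      exact (ENNReal.continuous_ofReal.tendsto _).comp
        (Filter.Tendsto.comp (hI0_cont _ hmem0) h2)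
    set τ : ℝ → ℝ := fun t => max 0 (min t T) with hτ
    have hτcont : Continuous τ := by simp only [hτ]; fun_prop
    have hτmem : ∀ t, τ t ∈ Set.Icc (0:ℝ) T :=
      fun t => ⟨le_max_left _ _, max_le hT.le (min_le_right _ _)⟩
    have hτid : ∀ t ∈ Set.Ioo (0:ℝ) T, τ t = t := by
      intro t ht
      simp only [hτ]
      rw [min_eq_left ht.2.le, max_eq_right ht.1.le]
    have hkcd_pt : ∀ t ∈ Set.Ioo (0:ℝ) T, ∀ r,
        Tendsto (fun δ => kbar (cd δ t) r) (𝓝[>] (0:ℝ)) (𝓝 (kbar (c t) r)) := by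
      intro t ht r
      have hmem : c t ∈ nonnegCone 𝒴 := fun y => (hpos t (Set.Ioo_subset_Icc_self ht)).1 y
      have h2 : Tendsto (fun δ => cd δ t) (𝓝[>] (0:ℝ)) (𝓝[nonnegCone 𝒴] (c t)) := by
        rw [tendsto_nhdsWithin_iff]
        refine ⟨hcd_pt t ht, ?_⟩
        filter_upwards [hev] with δ hδ
        exact hcd_cone δ hδ t (hIooU δ hδ ht)
      exact ((continuous_apply r).tendsto _).comp
        (Filter.Tendsto.comp (hk_C1.continuousOn _ hmem) h2)
    have hJpart : Tendsto
        (fun δ => ∫⁻ t in Set.Ioo (0:ℝ) T, ∑ r, bes (dwd δ t r) (kbar (cd δ t) r))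
        (𝓝[>] (0:ℝ))
        (𝓝 (∫⁻ t in Set.Ioo (0:ℝ) T, ∑ r, bes (dw t r) (kbar (c t) r))) := by
      have key := tendsto_lintegral_filter_of_dominated_convergence
        (μ := volume.restrict (Set.Ioo (0:ℝ) T)) (l := 𝓝[>] (0:ℝ))
        (F := fun δ t => ∑ r, ENNReal.ofReal ((dwd δ (τ t) r) * Real.log (dwd δ (τ t) r)
          - (dwd δ (τ t) r) * Real.log (kbar (cd δ (τ t)) r)
          - dwd δ (τ t) r + kbar (cd δ (τ t)) r))
        (f := fun t => ∑ r, bes (dw t r) (kbar (c t) r))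
        (bound := fun _ => (Fintype.card ℛ : ENNReal) * ENNReal.ofReal CB) ?_ ?_ ?_ ?_
      · refine Tendsto.congr' ?_ key
        filter_upwards [hev] with δ hδ
        refine setLIntegral_congr_fun measurableSet_Ioo (fun t ht => ?_)
        rw [hτid t ht]
        refine Finset.sum_congr rfl fun r _ => ?_
        exact (besEq (lt_of_lt_of_le hδ.1 (hdwd_pos δ hδ t (hIooU δ hδ ht) r)).le
          (lt_of_lt_of_le hκpos (hkcd δ hδ t (hIooU δ hδ ht) r))).symm
      · filter_upwards [hev] with δ hδ
        have hdwdτ : Continuous (fun t => dwd δ (τ t)) :=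
          ((hdwd_smoothU δ hδ).continuousOn).comp_continuous hτcont
            (fun t => hIccU δ hδ (hτmem t))
        have hcdτ : Continuous (fun t => cd δ (τ t)) :=
          ((hcd_smoothU δ hδ).continuousOn).comp_continuous hτcont
            (fun t => hIccU δ hδ (hτmem t))
        have hkτv : Continuous (fun t => kbar (cd δ (τ t))) :=
          hk_C1.continuousOn.comp_continuous hcdτ
            (fun t => hcd_cone δ hδ (τ t) (hIccU δ hδ (hτmem t)))
        refine Finset.measurable_sum _ fun r _ => Measurable.ennreal_ofReal ?_
        have hjτ : Continuous (fun t => dwd δ (τ t) r) := (continuous_apply r).comp hdwdτ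
        have hkτ : Continuous (fun t => kbar (cd δ (τ t)) r) := (continuous_apply r).comp hkτv
        have hlogk : Continuous (fun t => Real.log (kbar (cd δ (τ t)) r)) := by
          refine Real.continuousOn_log.comp_continuous hkτ (fun t => ?_)
          exact (lt_of_lt_of_le hκpos (hkcd δ hδ (τ t) (hIccU δ hδ (hτmem t)) r)).ne'
        exact (((Real.continuous_mul_log.comp hjτ).sub (hjτ.mul hlogk)).sub hjτ
          |>.add hkτ).measurable
      · filter_upwards [hev] with δ hδ
        rw [ae_restrict_iff' measurableSet_Ioo]
        refine ae_of_all _ fun t ht => ?_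
        have hb : ∀ r ∈ (Finset.univ : Finset ℛ),
            ENNReal.ofReal ((dwd δ (τ t) r) * Real.log (dwd δ (τ t) r)
              - (dwd δ (τ t) r) * Real.log (kbar (cd δ (τ t)) r)
              - dwd δ (τ t) r + kbar (cd δ (τ t)) r) ≤ ENNReal.ofReal CB := by
          intro r _
          refine ENNReal.ofReal_le_ofReal ?_
          refine hCB _ ⟨?_, ?_⟩ _ ⟨?_, ?_⟩
          · exact (lt_of_lt_of_le hδ.1 (hdwd_pos δ hδ (τ t) (hIccU δ hδ (hτmem t)) r)).le
          · refine le_trans (le_abs_self _) (le_trans ?_ (hdwd_bd δ hδ (τ t) (hτmem t)))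
            simpa [Real.norm_eq_abs] using norm_le_pi_norm (dwd δ (τ t)) r
          · exact hkcd δ hδ (τ t) (hIccU δ hδ (hτmem t)) r
          · exact hMk δ hδ (τ t) (hτmem t) r
        refine le_trans (Finset.sum_le_card_nsmul _ _ _ hb) ?_
        simp [nsmul_eq_mul]
      · rw [lintegral_const, Measure.restrict_apply_univ]
        exact ENNReal.mul_ne_top
          (ENNReal.mul_ne_top (ENNReal.natCast_ne_top _) ENNReal.ofReal_ne_top)
          measure_Ioo_lt_top.ne
      · rw [ae_restrict_iff' measurableSet_Ioo]
        refine ae_of_all _ fun t ht => ?_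
        simp only [hτid t ht]
        refine tendsto_finset_sum _ fun r _ => ?_
        have hknn : (0:ℝ) < kbar (c t) r := lt_of_lt_of_le hκpos (hκ t ht r)
        rw [besEq ((hconteq t ht).1 r) hknn]
        exact (ENNReal.continuous_ofReal.tendsto _).comp
          (besB_tendsto (hdwd_pt t ht r) (hkcd_pt t ht r) hknn)
    exact hIpart.add hJpart
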